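/- arXiv:math/0106099 — 2 statements merged into one kernel-verified Lean document; each statement's English description precedes it below -/
import Mathlib

section
/- Define g : ℕ → ℕ by g(m) = sInf {x : ℕ | ∃ y, y ∈ eval (ofNat m) x ∧ y < 2^x}, i.e. g(m) is the least input x at which the machine with Gödel number m halts with output strictly smaller than 2^x (and g(m) = 0 if there is no such x). Then no computable total function dominates g: for every computable h : ℕ → ℕ it is not the case that there exists y such that h(x) ≥ g(x) for all x > y. (The paper's main result, Proposition 3.2, for the function g defined over all Turing machines.) -/
/-! Pick, by Kleene's recursion theorem, a machine `m > y` that halts only on input `h m + 1`,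
with output `0 < 2 ^ (h m + 1)`. Then `g m = h m + 1 > h m`, so `h` fails to dominate `g` at `m`.
Indices above `y` are reached by padding: `c ↦ c.comp id` preserves the semantics and strictly
increases the Gödel number. -/

namespace Nat.Partrec.Code

def pad (c : Code) : Code := c.comp Code.id

theorem eval_pad (c : Code) : c.pad.eval = c.eval := by
  funext n
  simp only [pad, eval, eval_id]
  exact Part.bind_some n c.eval

theorem encode_lt_encode_pad (c : Code) : Encodable.encode c < Encodable.encode c.pad :=
  (encode_lt_comp c Code.id).1

theorem primrec_pad : _root_.Primrec pad :=
  primrec₂_comp.comp _root_.Primrec.id (_root_.Primrec.const Code.id)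

theorem eval_pad_iterate (k : ℕ) (c : Code) : (pad^[k] c).eval = c.eval := by
  induction k generalizing c with
  | zero => rfl
  | succ k ih => rw [Function.iterate_succ_apply, ih, eval_pad]

theorem le_encode_pad_iterate (k : ℕ) (c : Code) : k ≤ Encodable.encode (pad^[k] c) := by
  induction k with
  | zero => exact Nat.zero_le _
  | succ k ih =>
    rw [Function.iterate_succ_apply']
    exact ih.trans_lt (encode_lt_encode_pad _)

theorem primrec_pad_iterate (k : ℕ) : _root_.Primrec (pad^[k]) :=
  _root_.Primrec.nat_iterate (_root_.Primrec.const k) _root_.Primrec.id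
    (primrec_pad.comp _root_.Primrec.snd).to₂

theorem exists_gt_eval_ofNat_eq {f : ℕ → ℕ →. ℕ} (hf : Partrec₂ f) (y : ℕ) :
    ∃ m > y, (Denumerable.ofNat Code m).eval = f m := by
  let index : Code → ℕ := fun c => Encodable.encode (pad^[y + 1] c)
  have hindex : Computable index := (_root_.Primrec.encode.comp (primrec_pad_iterate _)).to_comp
  obtain ⟨c, hc⟩ := fixed_point₂ (hf.comp (hindex.comp Computable.fst) Computable.snd).to₂
  refine ⟨index c, le_encode_pad_iterate _ _, ?_⟩
  rw [Denumerable.ofNat_encode, eval_pad_iterate, hc]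

end Nat.Partrec.Code

theorem no_computable_function_dominates_g (h : ℕ → ℕ) (hh : Computable h) :
    ¬ ∃ y : ℕ, ∀ x : ℕ, x > y →
      h x ≥ sInf {z : ℕ |
        ∃ w, w ∈ (Denumerable.ofNat Nat.Partrec.Code x).eval z ∧ w < 2 ^ z} := by
  rintro ⟨y, hy⟩
  let f : ℕ → ℕ →. ℕ := fun m z => if z = h m + 1 then Part.some 0 else Part.none
  have hf : Partrec₂ f :=
    (Partrec.cond (Primrec.eq.decide.to_comp.comp Computable.snd
      (Computable.succ.comp (hh.comp Computable.fst))) (Partrec.const' (Part.some 0))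
      Partrec.none).of_eq fun p => by simp [f, Bool.cond_decide]
  obtain ⟨m, hmy, hm⟩ := Nat.Partrec.Code.exists_gt_eval_ofNat_eq hf y
  have halts : {z : ℕ | ∃ w, w ∈ (Denumerable.ofNat Nat.Partrec.Code m).eval z ∧ w < 2 ^ z}
      = {h m + 1} := by
    ext z
    by_cases hz : z = h m + 1 <;> simp [hm, f, hz]
  have := hy m hmy
  rw [halts, csInf_singleton] at this
  omega
end

section
/- The function g : ℕ → ℕ defined by g(m) = sInf {x : ℕ | ∃ y, y ∈ eval (ofNat m) x ∧ y < 2^x} is not computable. (Since g trivially dominates itself, this is an immediate consequence of the paper's main result that no total recursive function dominates g.) -/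
/-! The value `g m` depends only on the partial function computed by the code `m`, so by Rice's
theorem a computable `g` would take the same value on all codes of partial recursive functions.
But the nowhere defined function gives `sInf ∅ = 0`, while the constant function `1` gives
`sInf {x | 1 < 2 ^ x} = 1`. -/

open Nat.Partrec

theorem Nat.Partrec.Code.eq_of_computable_comp_eval {Φ : (ℕ →. ℕ) → ℕ}
    (hΦ : Computable fun m => Φ (Denumerable.ofNat Code m).eval) {f g : ℕ →. ℕ}
    (hf : Nat.Partrec f) (hg : Nat.Partrec g) : Φ f = Φ g := by
  have hdec : ComputablePred fun c : Code => c.eval ∈ {h | Φ h = Φ f} := by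
    refine ComputablePred.computable_iff.2
      ⟨fun c => decide (Φ c.eval = Φ f), ?_, funext fun c => by simp⟩
    have hΦc : Computable fun c : Code => Φ c.eval := by
      simpa using hΦ.comp (Computable.encode (α := Code))
    exact Primrec.eq.decide.to_comp.comp hΦc (Computable.const _)
  exact (ComputablePred.rice _ hdec hf hg rfl).symm

theorem g_not_computable :
    ¬ Computable (fun m : ℕ => sInf {x : ℕ |
      ∃ y, y ∈ (Denumerable.ofNat Nat.Partrec.Code m).eval x ∧ y < 2 ^ x}) := by
  intro hg
  have hconst : Nat.Partrec fun _ => Part.some 1 :=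
    Partrec.nat_iff.1 (Computable.const 1).partrec
  have hsame := Code.eq_of_computable_comp_eval
    (Φ := fun f => sInf {x | ∃ y ∈ f x, y < 2 ^ x}) hg Nat.Partrec.none hconst
  have hone : sInf {x : ℕ | x ≠ 0} = 1 :=
    le_antisymm (Nat.sInf_le one_ne_zero)
      (Nat.one_le_iff_ne_zero.2 (Nat.sInf_mem (s := {x : ℕ | x ≠ 0}) ⟨1, one_ne_zero⟩))
  simp [hone] at hsame
end
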